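/- Let Ψ : ℕ → (0,∞) be such that ∑_{m=1}^∞ Ψ(m)⁴·m⁷ < ∞. Then the set 𝒲(Ψ) of quaternions ξ such that |ξ − p·q⁻¹|₂ < Ψ(⌊|q|₂⌋) for infinitely many pairs of Hurwitz integers (p,q), q ≠ 0, has 4-dimensional Lebesgue measure zero. -/

import Mathlib

open MeasureTheory Metric Filter Set Quaternion

noncomputable instance : MeasurableSpace (Quaternion ℝ) := borel _
instance : BorelSpace (Quaternion ℝ) := ⟨rfl⟩

/-- Lebesgue measure on the quaternions, transported from `ℝ⁴`. -/
noncomputable instance : MeasureSpace (Quaternion ℝ) :=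
  ⟨Measure.map (Quaternion.equivTuple ℝ).symm volume⟩

/-- A quaternion is a Hurwitz integer if all its coordinates are integers or
all its coordinates are in `ℤ + 1/2`. -/
def IsHurwitz (x : Quaternion ℝ) : Prop :=
  (∃ a b c d : ℤ, x.re = a ∧ x.imI = b ∧ x.imJ = c ∧ x.imK = d) ∨
  (∃ a b c d : ℤ, x.re = a + 1/2 ∧ x.imI = b + 1/2 ∧ x.imJ = c + 1/2 ∧ x.imK = d + 1/2)

/-- The fundamental domain `Δ = [0,1)³ × [0,1/2)` for Hurwitz translations. -/
def fundDom : Set (Quaternion ℝ) :=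
  {x | 0 ≤ x.re ∧ x.re < 1 ∧ 0 ≤ x.imI ∧ x.imI < 1 ∧ 0 ≤ x.imJ ∧ x.imJ < 1 ∧
    0 ≤ x.imK ∧ x.imK < 1/2}

/-- The closed fundamental domain `Δ̄ = [0,1]³ × [0,1/2]`. -/
def fundDomCl : Set (Quaternion ℝ) :=
  {x | 0 ≤ x.re ∧ x.re ≤ 1 ∧ 0 ≤ x.imI ∧ x.imI ≤ 1 ∧ 0 ≤ x.imJ ∧ x.imJ ≤ 1 ∧
    0 ≤ x.imK ∧ x.imK ≤ 1/2}

/-- The set of `Ψ`-approximable quaternions. -/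
def WSet (Ψ : ℕ → ℝ) : Set (Quaternion ℝ) :=
  {ξ | {pq : Quaternion ℝ × Quaternion ℝ | IsHurwitz pq.1 ∧ IsHurwitz pq.2 ∧ pq.2 ≠ 0 ∧
    ‖ξ - pq.1 * pq.2⁻¹‖ < Ψ ⌊‖pq.2‖⌋₊}.Infinite}

/-! Borel–Cantelli. It suffices to treat `ξ` with `‖ξ‖ ≤ N`. Summability bounds `Ψ`, so every
approximation `p q⁻¹` to such a `ξ` with `⌊‖q‖⌋ = m` has `‖p‖ ≤ C (m + 1)`. Distinct Hurwitz
integers are at distance at least `1`, so the balls of radius `1/2` around them are disjoint, and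
comparing volumes gives `≪ m⁴` such `p` and `≪ m³` such `q` (the `q` lie in a shell of width `1`).
Hence the approximations of level `m` are covered by `≪ m⁷` balls of radius `Ψ m`, of total volume
`≪ Ψ(m)⁴ m⁷`, a summable sequence; and `ξ ∈ 𝒲(Ψ)` lies in infinitely many levels because each
level consists of finitely many pairs. -/

open Module

instance : (volume : Measure ℍ[ℝ]).IsAddHaarMeasure :=
  (linearIsometryEquivTuple.toLinearEquiv.trans (WithLp.linearEquiv 2 ℝ (Fin 4 → ℝ))).symm
    |>.toContinuousLinearEquiv.isAddHaarMeasure_map volume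

section Packing

variable {E : Type*} [NormedAddCommGroup E] [MeasurableSpace E] [BorelSpace E]
  (μ : Measure E) [μ.IsAddHaarMeasure]

theorem measure_biUnion_ball_le_ncard_mul {ι : Type*} {I : Set ι} (hI : I.Finite) (c : ι → E)
    (r : ℝ) : μ (⋃ i ∈ I, ball (c i) r) ≤ I.ncard * μ (ball 0 r) := by
  calc μ (⋃ i ∈ I, ball (c i) r) = μ (⋃ i ∈ hI.toFinset, ball (c i) r) := by simp
    _ ≤ ∑ i ∈ hI.toFinset, μ (ball (c i) r) := measure_biUnion_finset_le _ _
    _ = I.ncard * μ (ball 0 r) := by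
      simp [Measure.addHaar_ball_center, Set.ncard_eq_toFinset_card I hI]

theorem card_mul_measure_ball_le_of_pairwise_le_dist {F : Finset E} {r a b : ℝ}
    (hF : (F : Set E).Pairwise fun x y => 2 * r ≤ dist x y) (hnorm : ∀ v ∈ F, a ≤ ‖v‖ ∧ ‖v‖ ≤ b) :
    F.card * μ (ball 0 r) ≤ μ (closedBall 0 (b + r) \ closedBall 0 (a - r)) := by
  have hdisj : (F : Set E).PairwiseDisjoint (ball · r) := fun x hx y hy hxy =>
    ball_disjoint_ball (by linarith [hF hx hy hxy])
  calc F.card * μ (ball 0 r) = μ (⋃ v ∈ F, ball v r) := by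
        rw [measure_biUnion_finset hdisj fun _ _ => measurableSet_ball]
        simp [Measure.addHaar_ball_center]
    _ ≤ μ (closedBall 0 (b + r) \ closedBall 0 (a - r)) := by
      refine measure_mono (Set.iUnion₂_subset fun v hv x hx => ?_)
      have hxv := mem_ball_iff_norm.1 hx
      have hxv' := abs_lt.1 ((abs_norm_sub_norm_le x v).trans_lt hxv)
      have := hnorm v hv
      simp only [Set.mem_sdiff, mem_closedBall_zero_iff, not_le]
      constructor <;> linarith

variable [NormedSpace ℝ E] [FiniteDimensional ℝ E]

theorem natCast_mul_pow_le_of_mul_measure_ball_le {n : ℕ} {r y : ℝ} (hr : 0 < r) (hy : 0 ≤ y)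
    (h : n * μ (ball 0 r) ≤ ENNReal.ofReal y * μ (ball 0 1)) : n * r ^ finrank ℝ E ≤ y := by
  rwa [Measure.addHaar_ball_of_pos μ _ hr, ← mul_assoc,
    ENNReal.mul_le_mul_iff_left (measure_ball_pos μ 0 one_pos).ne' measure_ball_lt_top.ne,
    ← ENNReal.ofReal_natCast, ← ENNReal.ofReal_mul (by positivity),
    ENNReal.ofReal_le_ofReal_iff hy] at h

theorem card_mul_pow_le_sub_pow_of_pairwise_le_dist {F : Finset E} {r a b : ℝ} (hr : 0 < r)
    (hra : r ≤ a) (hab : a ≤ b) (hF : (F : Set E).Pairwise fun x y => 2 * r ≤ dist x y)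
    (hnorm : ∀ v ∈ F, a ≤ ‖v‖ ∧ ‖v‖ ≤ b) :
    F.card * r ^ finrank ℝ E ≤ (b + r) ^ finrank ℝ E - (a - r) ^ finrank ℝ E := by
  let μ : Measure E := Measure.addHaar
  refine natCast_mul_pow_le_of_mul_measure_ball_le μ hr
    (sub_nonneg.2 (pow_le_pow_left₀ (by linarith) (by linarith) _)) ?_
  have h := card_mul_measure_ball_le_of_pairwise_le_dist μ hF hnorm
  rwa [measure_sdiff (closedBall_subset_closedBall (by linarith))
      measurableSet_closedBall.nullMeasurableSet measure_closedBall_lt_top.ne,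
    Measure.addHaar_closedBall μ _ (by linarith), Measure.addHaar_closedBall μ _ (by linarith),
    ← ENNReal.sub_mul fun _ _ => measure_ball_lt_top.ne,
    ← ENNReal.ofReal_sub _ (by positivity)] at h

theorem card_mul_pow_le_pow_of_pairwise_le_dist {F : Finset E} {r b : ℝ} (hr : 0 < r)
    (hb : 0 ≤ b) (hF : (F : Set E).Pairwise fun x y => 2 * r ≤ dist x y)
    (hnorm : ∀ v ∈ F, ‖v‖ ≤ b) :
    F.card * r ^ finrank ℝ E ≤ (b + r) ^ finrank ℝ E := by
  let μ : Measure E := Measure.addHaar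
  refine natCast_mul_pow_le_of_mul_measure_ball_le μ hr (by positivity) ?_
  have h := card_mul_measure_ball_le_of_pairwise_le_dist μ (a := 0) hF
    fun v hv => ⟨norm_nonneg v, hnorm v hv⟩
  rw [← Measure.addHaar_closedBall μ _ (by positivity)]
  exact h.trans (measure_mono sdiff_subset)

theorem finite_of_pairwise_le_dist_of_norm_le {S : Set E} {r b : ℝ} (hr : 0 < r)
    (hS : S.Pairwise fun x y => 2 * r ≤ dist x y) (hb : ∀ v ∈ S, ‖v‖ ≤ b) : S.Finite := by
  rcases S.eq_empty_or_nonempty with rfl | ⟨v, hv⟩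
  · exact finite_empty
  by_contra hinf
  obtain ⟨n, hn⟩ := exists_nat_gt ((b + r) ^ finrank ℝ E / r ^ finrank ℝ E)
  obtain ⟨F, hFS, rfl⟩ := Set.Infinite.exists_subset_card_eq hinf n
  have := card_mul_pow_le_pow_of_pairwise_le_dist hr ((norm_nonneg v).trans (hb v hv))
    (hS.mono hFS) fun v hv => hb v (hFS hv)
  rw [div_lt_iff₀ (by positivity)] at hn
  linarith

end Packing

theorem IsHurwitz.sub {x y : ℍ[ℝ]} (hx : IsHurwitz x) (hy : IsHurwitz y) : IsHurwitz (x - y) := by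
  rcases hx with ⟨a, b, c, d, hx⟩ | ⟨a, b, c, d, hx⟩ <;>
    rcases hy with ⟨a', b', c', d', hy⟩ | ⟨a', b', c', d', hy⟩
  · exact .inl ⟨a - a', b - b', c - c', d - d', by simp [hx, hy]⟩
  · exact .inr ⟨a - a' - 1, b - b' - 1, c - c' - 1, d - d' - 1, by simp [hx, hy]; ring_nf; simp⟩
  · exact .inr ⟨a - a', b - b', c - c', d - d', by simp [hx, hy]; ring_nf; simp⟩
  · exact .inl ⟨a - a', b - b', c - c', d - d', by simp [hx, hy]⟩

theorem IsHurwitz.one_le_norm {x : ℍ[ℝ]} (hx : IsHurwitz x) (hx0 : x ≠ 0) : 1 ≤ ‖x‖ := by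
  rw [← one_le_sq_iff₀ (norm_nonneg x), sq, ← normSq_eq_norm_mul_self, normSq_def']
  rcases hx with ⟨a, b, c, d, ha, hb, hc, hd⟩ | ⟨a, b, c, d, ha, hb, hc, hd⟩
  · have hne : a ^ 2 + b ^ 2 + c ^ 2 + d ^ 2 ≠ 0 := by
      contrapose! hx0
      have h2 : a ^ 2 = 0 ∧ b ^ 2 = 0 ∧ c ^ 2 = 0 ∧ d ^ 2 = 0 := by
        refine ⟨?_, ?_, ?_, ?_⟩ <;> nlinarith [sq_nonneg a, sq_nonneg b, sq_nonneg c, sq_nonneg d]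
      ext <;> simp_all
    have : (1 : ℤ) ≤ a ^ 2 + b ^ 2 + c ^ 2 + d ^ 2 := lt_of_le_of_ne (by positivity) hne.symm
    rw [ha, hb, hc, hd]
    exact_mod_cast this
  · have half_sq (n : ℤ) : (1 / 4 : ℝ) ≤ (n + 1 / 2) ^ 2 := by
      have : (1 : ℝ) ≤ (2 * n + 1) ^ 2 := by
        exact_mod_cast (one_le_sq_iff_one_le_abs _).2 (Int.one_le_abs (by omega))
      nlinarith
    rw [ha, hb, hc, hd]
    linarith [half_sq a, half_sq b, half_sq c, half_sq d]

theorem IsHurwitz.one_le_dist {x y : ℍ[ℝ]} (hx : IsHurwitz x) (hy : IsHurwitz y) (hxy : x ≠ y) :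
    1 ≤ dist x y :=
  dist_eq_norm x y ▸ (hx.sub hy).one_le_norm (sub_ne_zero.2 hxy)

theorem pairwise_le_dist_of_forall_isHurwitz {S : Set ℍ[ℝ]} (hS : ∀ x ∈ S, IsHurwitz x) :
    S.Pairwise fun x y => 2 * (1 / 2) ≤ dist x y := fun x hx y hy hxy => by
  simpa using (hS x hx).one_le_dist (hS y hy) hxy

theorem finite_setOf_isHurwitz_norm_le (R : ℝ) : {x : ℍ[ℝ] | IsHurwitz x ∧ ‖x‖ ≤ R}.Finite :=
  finite_of_pairwise_le_dist_of_norm_le one_half_pos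
    (pairwise_le_dist_of_forall_isHurwitz fun _ hx => hx.1) fun _ hx => hx.2

theorem ncard_setOf_isHurwitz_norm_le {R : ℝ} (hR : 0 ≤ R) :
    ({x : ℍ[ℝ] | IsHurwitz x ∧ ‖x‖ ≤ R}.ncard : ℝ) ≤ 16 * (R + 1 / 2) ^ 4 := by
  have hfin := finite_setOf_isHurwitz_norm_le R
  have h := card_mul_pow_le_pow_of_pairwise_le_dist (F := hfin.toFinset) one_half_pos hR
    (by simpa using pairwise_le_dist_of_forall_isHurwitz fun _ hx => hx.1)
    (by simp +contextual)
  rw [finrank_eq_four, ← Set.ncard_eq_toFinset_card _ hfin] at h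
  linarith

theorem finite_setOf_isHurwitz_floor_norm_eq (m : ℕ) :
    {q : ℍ[ℝ] | IsHurwitz q ∧ q ≠ 0 ∧ ⌊‖q‖⌋₊ = m}.Finite :=
  (finite_setOf_isHurwitz_norm_le (m + 1)).subset fun q ⟨hq, _, hqm⟩ =>
    ⟨hq, ((Nat.floor_eq_iff (norm_nonneg q)).1 hqm).2.le⟩

theorem ncard_setOf_isHurwitz_floor_norm_eq (m : ℕ) :
    ({q : ℍ[ℝ] | IsHurwitz q ∧ q ≠ 0 ∧ ⌊‖q‖⌋₊ = m}.ncard : ℝ) ≤ 1280 * m ^ 3 := by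
  rcases Nat.eq_zero_or_pos m with rfl | hm
  · have : {q : ℍ[ℝ] | IsHurwitz q ∧ q ≠ 0 ∧ ⌊‖q‖⌋₊ = 0} = ∅ := by
      ext q
      simp only [mem_ofPred_eq, mem_empty_iff_false, iff_false, not_and, Nat.floor_eq_zero, not_lt]
      exact IsHurwitz.one_le_norm
    rw [this, ncard_empty, Nat.cast_zero]
    positivity
  have hfin := finite_setOf_isHurwitz_floor_norm_eq m
  have hm1 : (1 : ℝ) ≤ m := by exact_mod_cast hm
  have h := card_mul_pow_le_sub_pow_of_pairwise_le_dist (F := hfin.toFinset) (a := m) (b := m + 1)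
    one_half_pos (by linarith) (by linarith)
    (by simpa using pairwise_le_dist_of_forall_isHurwitz fun _ hx => hx.1)
    (by
      simp only [Set.Finite.mem_toFinset, mem_ofPred_eq]
      rintro q ⟨-, -, hqm⟩
      exact ((Nat.floor_eq_iff (norm_nonneg q)).1 hqm).imp_right le_of_lt)
  rw [finrank_eq_four, ← Set.ncard_eq_toFinset_card _ hfin] at h
  nlinarith [pow_le_pow_left₀ zero_le_one hm1 2, pow_le_pow_left₀ zero_le_one hm1 3]

def hurwitzPairs (C : ℝ) (m : ℕ) : Set (ℍ[ℝ] × ℍ[ℝ]) :=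
  {p | IsHurwitz p ∧ ‖p‖ ≤ C * (m + 1)} ×ˢ {q | IsHurwitz q ∧ q ≠ 0 ∧ ⌊‖q‖⌋₊ = m}

theorem finite_hurwitzPairs (C : ℝ) (m : ℕ) : (hurwitzPairs C m).Finite :=
  (finite_setOf_isHurwitz_norm_le _).prod (finite_setOf_isHurwitz_floor_norm_eq m)

theorem ncard_hurwitzPairs_le {C : ℝ} (hC : 0 ≤ C) (m : ℕ) :
    ((hurwitzPairs C m).ncard : ℝ) ≤ 327680 * (C + 1) ^ 4 * m ^ 7 := by
  rw [hurwitzPairs, ncard_prod, Nat.cast_mul]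
  have hP := ncard_setOf_isHurwitz_norm_le (R := C * (m + 1)) (by positivity)
  have hQ := ncard_setOf_isHurwitz_floor_norm_eq m
  rcases Nat.eq_zero_or_pos m with rfl | hm
  · norm_num at hQ ⊢
    simp [hQ]
  have hm1 : (1 : ℝ) ≤ m := by exact_mod_cast hm
  calc _ ≤ 16 * (C * (m + 1) + 1 / 2) ^ 4 * (1280 * m ^ 3) :=
        mul_le_mul hP hQ (by positivity) (by positivity)
    _ ≤ 16 * (2 * (C + 1) * m) ^ 4 * (1280 * m ^ 3) := by
        gcongr
        nlinarith
    _ = 327680 * (C + 1) ^ 4 * m ^ 7 := by ring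

def approxSet (Ψ : ℕ → ℝ) (C : ℝ) (m : ℕ) : Set ℍ[ℝ] :=
  ⋃ pq ∈ hurwitzPairs C m, ball (pq.1 * pq.2⁻¹) (Ψ m)

theorem Quaternion.volume_ball_le (x : ℍ[ℝ]) (r : ℝ) :
    volume (ball x r) ≤ ENNReal.ofReal (r ^ 4) * volume (ball (0 : ℍ[ℝ]) 1) := by
  rcases le_or_gt 0 r with hr | hr
  · rw [Measure.addHaar_ball _ _ hr, finrank_eq_four]
  · simp [ball_eq_empty.2 hr.le]

theorem volume_approxSet_le (Ψ : ℕ → ℝ) {C : ℝ} (hC : 0 ≤ C) (m : ℕ) :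
    volume (approxSet Ψ C m) ≤
      ENNReal.ofReal (327680 * (C + 1) ^ 4 * (Ψ m ^ 4 * m ^ 7)) * volume (ball (0 : ℍ[ℝ]) 1) :=
  calc volume (approxSet Ψ C m)
      ≤ (hurwitzPairs C m).ncard * volume (ball (0 : ℍ[ℝ]) (Ψ m)) :=
        measure_biUnion_ball_le_ncard_mul _ (finite_hurwitzPairs C m) _ _
    _ ≤ ENNReal.ofReal (327680 * (C + 1) ^ 4 * m ^ 7) *
          (ENNReal.ofReal (Ψ m ^ 4) * volume (ball (0 : ℍ[ℝ]) 1)) := by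
        gcongr
        · rw [← ENNReal.ofReal_natCast]
          exact ENNReal.ofReal_le_ofReal (ncard_hurwitzPairs_le hC m)
        · exact volume_ball_le 0 (Ψ m)
    _ = _ := by
        rw [← mul_assoc, ← ENNReal.ofReal_mul (by positivity)]
        ring_nf

theorem volume_limsup_approxSet_eq_zero {Ψ : ℕ → ℝ}
    (hsum : Summable fun m : ℕ => Ψ m ^ 4 * (m : ℝ) ^ 7) {C : ℝ} (hC : 0 ≤ C) :
    volume (limsup (approxSet Ψ C) atTop) = 0 := by
  refine measure_limsup_atTop_eq_zero <| ne_top_of_le_ne_top ?_ <|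
    ENNReal.tsum_le_tsum fun m => volume_approxSet_le Ψ hC m
  rw [ENNReal.tsum_mul_right, ← ENNReal.ofReal_tsum_of_nonneg (fun m => by positivity)
    (hsum.mul_left _)]
  exact ENNReal.mul_ne_top ENNReal.ofReal_ne_top measure_ball_lt_top.ne

theorem exists_bound_of_summable {Ψ : ℕ → ℝ}
    (hsum : Summable fun m : ℕ => Ψ m ^ 4 * (m : ℝ) ^ 7) :
    ∃ C, 0 ≤ C ∧ ∀ m, 1 ≤ m → Ψ m ≤ C := by
  refine ⟨1 + ∑' m, Ψ m ^ 4 * (m : ℝ) ^ 7,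
    add_nonneg zero_le_one (tsum_nonneg fun m => by positivity), fun m hm => ?_⟩
  have h₁ : Ψ m ≤ 1 + Ψ m ^ 4 := by nlinarith [sq_nonneg (Ψ m ^ 2 - 1 / 2), sq_nonneg (Ψ m - 1 / 2)]
  have h₂ : Ψ m ^ 4 ≤ Ψ m ^ 4 * (m : ℝ) ^ 7 :=
    le_mul_of_one_le_right (by positivity) (one_le_pow₀ (by exact_mod_cast hm))
  linarith [hsum.le_tsum m fun j _ => by positivity]

theorem WSet_inter_closedBall_subset_limsup {Ψ : ℕ → ℝ} {C : ℝ}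
    (hΨC : ∀ m, 1 ≤ m → Ψ m ≤ C) (N : ℝ) :
    WSet Ψ ∩ closedBall 0 N ⊆ limsup (approxSet Ψ (N + C)) atTop := by
  rintro ξ ⟨hξ, hξN⟩
  rw [mem_closedBall_zero_iff] at hξN
  rw [mem_limsup_iff_frequently_mem, Nat.frequently_atTop_iff_infinite]
  refine fun hfin => hξ ((hfin.biUnion fun m _ => finite_hurwitzPairs (N + C) m).subset ?_)
  rintro ⟨p, q⟩ ⟨hp, hq, hq0, happ⟩
  set m := ⌊‖q‖⌋₊
  have hm : 1 ≤ m := Nat.le_floor (by simpa using hq.one_le_norm hq0)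
  have hpq : ‖p * q⁻¹‖ ≤ N + C := by
    linarith [norm_le_norm_add_norm_sub' (p * q⁻¹) ξ, norm_sub_rev ξ (p * q⁻¹), hΨC m hm]
  have hmem : (p, q) ∈ hurwitzPairs (N + C) m := by
    refine ⟨⟨hp, ?_⟩, hq, hq0, rfl⟩
    calc ‖p‖ = ‖p * q⁻¹‖ * ‖q‖ := by rw [← norm_mul, inv_mul_cancel_right₀ hq0]
      _ ≤ (N + C) * (m + 1) :=
        mul_le_mul hpq (Nat.lt_floor_add_one _).le (norm_nonneg _) ((norm_nonneg _).trans hpq)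
  exact mem_biUnion (mem_iUnion₂.2 ⟨(p, q), hmem, mem_ball_iff_norm.2 happ⟩) hmem

theorem quaternionic_khintchine_convergence_general (Ψ : ℕ → ℝ)
    (hsum : Summable fun m : ℕ => Ψ m ^ 4 * (m : ℝ) ^ 7) :
    volume (WSet Ψ) = 0 := by
  obtain ⟨C, hC, hΨC⟩ := exists_bound_of_summable hsum
  have hcover : WSet Ψ ⊆ ⋃ N : ℕ, WSet Ψ ∩ closedBall 0 N := fun ξ hξ =>
    mem_iUnion.2 ⟨⌈‖ξ‖⌉₊, hξ, mem_closedBall_zero_iff.2 (Nat.le_ceil _)⟩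
  refine measure_mono_null hcover <| measure_iUnion_null fun N =>
    measure_mono_null (WSet_inter_closedBall_subset_limsup hΨC N) ?_
  exact volume_limsup_approxSet_eq_zero hsum (by positivity)

/-- Convergence part of Khintchine's theorem for quaternions. -/
theorem quaternionic_khintchine_convergence (Ψ : ℕ → ℝ) (hΨ : ∀ m, 0 < Ψ m)
    (hsum : Summable fun m : ℕ => Ψ m ^ 4 * (m : ℝ) ^ 7) :
    volume (WSet Ψ) = 0 :=
  quaternionic_khintchine_convergence_general Ψ hsum
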